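/- Coercivity of the discrete MPFC energy: there exists a constant C₅ > 0 depending only on α (not on h, m, n, L_x, L_y) such that for every periodic grid function φ, F(φ) ≥ C₅·‖φ‖_{2,2}² − (L_x·L_y)/4. -/

import Mathlib

open Finset

noncomputable section

/-- Periodic grid functions on an `m × n` grid (indices taken modulo `m` and `n`). -/
abbrev Grid (m n : ℕ) := ZMod m × ZMod n → ℝ

/-- Forward difference in the `x` direction. -/
def Dx {m n : ℕ} (h : ℝ) (φ : Grid m n) : Grid m n :=
  fun p => (φ (p.1 + 1, p.2) - φ p) / h

/-- Forward difference in the `y` direction. -/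
def Dy {m n : ℕ} (h : ℝ) (φ : Grid m n) : Grid m n :=
  fun p => (φ (p.1, p.2 + 1) - φ p) / h

/-- The five-point discrete Laplacian. -/
def lapH {m n : ℕ} (h : ℝ) (φ : Grid m n) : Grid m n :=
  fun p => (φ (p.1 + 1, p.2) + φ (p.1 - 1, p.2) + φ (p.1, p.2 + 1) + φ (p.1, p.2 - 1)
    - 4 * φ p) / h ^ 2

/-- Discrete `L²` norm. -/
def norm2 {m n : ℕ} [NeZero m] [NeZero n] (h : ℝ) (φ : Grid m n) : ℝ :=
  Real.sqrt (h ^ 2 * ∑ p : ZMod m × ZMod n, φ p ^ 2)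

/-- Discrete `L²` norm of the gradient. -/
def gradNorm2 {m n : ℕ} [NeZero m] [NeZero n] (h : ℝ) (φ : Grid m n) : ℝ :=
  Real.sqrt (h ^ 2 * ∑ p : ZMod m × ZMod n, (Dx h φ p ^ 2 + Dy h φ p ^ 2))

/-- Discrete `L⁴` norm. -/
def norm4 {m n : ℕ} [NeZero m] [NeZero n] (h : ℝ) (φ : Grid m n) : ℝ :=
  (h ^ 2 * ∑ p : ZMod m × ZMod n, φ p ^ 4) ^ ((1 : ℝ) / 4)

/-- Discrete `H²` norm. -/
def norm22 {m n : ℕ} [NeZero m] [NeZero n] (h : ℝ) (φ : Grid m n) : ℝ :=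
  Real.sqrt (norm2 h φ ^ 2 + gradNorm2 h φ ^ 2 + norm2 h (lapH h φ) ^ 2)

/-- The discrete MPFC energy
`F(φ) = ¼‖φ‖₄⁴ + (α/2)‖φ‖₂² − ‖∇ₕφ‖₂² + ½‖Δₕφ‖₂²`. -/
def energyF {m n : ℕ} [NeZero m] [NeZero n] (α h : ℝ) (φ : Grid m n) : ℝ :=
  1 / 4 * norm4 h φ ^ 4 + α / 2 * norm2 h φ ^ 2 - gradNorm2 h φ ^ 2
    + 1 / 2 * norm2 h (lapH h φ) ^ 2

/-!
The only negative term of `F` is `-‖∇ₕφ‖₂²`. Summation by parts gives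
`‖∇ₕφ‖₂² = -⟨φ, Δₕφ⟩ ≤ ‖φ‖₂ ‖Δₕφ‖₂`, and the pointwise bound `t⁴ ≥ 2t² - 1` gives
`¼‖φ‖₄⁴ ≥ ½‖φ‖₂² - Lx·Ly/4`. Using the first bound once more for the `‖∇ₕφ‖₂²` part of
`‖φ‖_{2,2}²`, what remains is a positive definite quadratic form in `‖φ‖₂` and `‖Δₕφ‖₂`,
which dominates `α/(6+2α)` times `‖φ‖_{2,2}²`.
-/

lemma sum_sq_sub_translate {G : Type*} [AddCommGroup G] [Fintype G] (φ : G → ℝ) (a : G) :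
    ∑ p, (φ (p + a) - φ p) ^ 2 = -∑ p, φ p * (φ (p + a) + φ (p - a) - 2 * φ p) := by
  have sq_translate : ∑ p, φ (p + a) ^ 2 = ∑ p, φ p ^ 2 :=
    Equiv.sum_comp (Equiv.addRight a) (fun q => φ q ^ 2)
  have mul_translate : ∑ p, φ (p + a) * φ p = ∑ p, φ p * φ (p - a) := by
    simpa using Equiv.sum_comp (Equiv.addRight a) (fun q => φ q * φ (q - a))
  have expand : ∑ p, ((φ (p + a) - φ p) ^ 2 + φ p * (φ (p + a) + φ (p - a) - 2 * φ p))
      = ∑ p, (φ (p + a) ^ 2 - φ p ^ 2) + ∑ p, (φ p * φ (p - a) - φ (p + a) * φ p) := by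
    rw [← sum_add_distrib]
    exact sum_congr rfl fun p _ => by ring
  rw [sum_sub_distrib, sum_sub_distrib, sq_translate, mul_translate, sub_self, sub_self,
    add_zero, sum_add_distrib] at expand
  linarith

lemma two_mul_sum_sq_sub_card_le_sum_pow_four {ι : Type*} [Fintype ι] (φ : ι → ℝ) :
    2 * ∑ i, φ i ^ 2 - Fintype.card ι ≤ ∑ i, φ i ^ 4 := by
  rw [mul_sum, ← Finset.card_univ, ← nsmul_one, ← sum_const, ← sum_sub_distrib]
  exact sum_le_sum fun i _ => by nlinarith [sq_nonneg (φ i ^ 2 - 1)]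

lemma quadratic_coercive_bound {α x y g : ℝ} (hα : 0 < α) (hg : g ≤ x * y) :
    α / (6 + 2 * α) * (x ^ 2 + g + y ^ 2) ≤ (1 + α) / 2 * x ^ 2 - g + y ^ 2 / 2 := by
  rw [div_mul_eq_mul_div, div_le_iff₀ (by positivity)]
  -- `12 ((3 + 3α + α²) x² - (6 + 3α) xy + 3 y²) = (6y - (6 + 3α) x)² + 3 (α x)²`
  nlinarith [sq_nonneg (6 * y - (6 + 3 * α) * x), sq_nonneg (α * x),
    mul_le_mul_of_nonneg_left hg (by positivity : (0 : ℝ) ≤ 6 + 3 * α)]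

section Grid

variable {m n : ℕ} [NeZero m] [NeZero n]

lemma norm2_sq (h : ℝ) (φ : Grid m n) : norm2 h φ ^ 2 = h ^ 2 * ∑ p, φ p ^ 2 :=
  Real.sq_sqrt (by positivity)

lemma norm2_eq_abs_mul_sqrt (h : ℝ) (φ : Grid m n) :
    norm2 h φ = |h| * √(∑ p, φ p ^ 2) := by
  rw [norm2, Real.sqrt_mul' _ (by positivity), Real.sqrt_sq_eq_abs]

lemma gradNorm2_sq (h : ℝ) (φ : Grid m n) :
    gradNorm2 h φ ^ 2 = h ^ 2 * ∑ p, (Dx h φ p ^ 2 + Dy h φ p ^ 2) :=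
  Real.sq_sqrt (by positivity)

lemma norm4_pow_four (h : ℝ) (φ : Grid m n) : norm4 h φ ^ 4 = h ^ 2 * ∑ p, φ p ^ 4 := by
  rw [norm4, ← Real.rpow_natCast, ← Real.rpow_mul (by positivity)]
  norm_num

lemma norm22_sq (h : ℝ) (φ : Grid m n) :
    norm22 h φ ^ 2 = norm2 h φ ^ 2 + gradNorm2 h φ ^ 2 + norm2 h (lapH h φ) ^ 2 :=
  Real.sq_sqrt (by positivity)

lemma gradNorm2_sq_eq_neg_sum_mul_lapH {h : ℝ} (hh : h ≠ 0) (φ : Grid m n) :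
    gradNorm2 h φ ^ 2 = -(h ^ 2 * ∑ p, φ p * lapH h φ p) := by
  have shift_x (p : ZMod m × ZMod n) (s : ZMod m) : (p.1 + s, p.2) = p + (s, 0) := by
    simp [Prod.ext_iff]
  have shift_y (p : ZMod m × ZMod n) (s : ZMod n) : (p.1, p.2 + s) = p + (0, s) := by
    simp [Prod.ext_iff]
  have lapH_eq (p : ZMod m × ZMod n) : h ^ 2 * lapH h φ p
      = (φ (p + (1, 0)) + φ (p - (1, 0)) - 2 * φ p)
        + (φ (p + (0, 1)) + φ (p - (0, 1)) - 2 * φ p) := by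
    rw [lapH, sub_eq_add_neg p.1, sub_eq_add_neg p.2, shift_x, shift_y, shift_x, shift_y]
    field_simp
    simp only [Prod.neg_mk, neg_zero, sub_eq_add_neg p]
    ring
  calc gradNorm2 h φ ^ 2
      = ∑ p, (φ (p + (1, 0)) - φ p) ^ 2 + ∑ p, (φ (p + (0, 1)) - φ p) ^ 2 := by
        rw [gradNorm2_sq, mul_sum, ← sum_add_distrib]
        refine sum_congr rfl fun p _ => ?_
        rw [Dx, Dy, shift_x, shift_y]
        field_simp
    _ = -(h ^ 2 * ∑ p, φ p * lapH h φ p) := by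
        simp only [sum_sq_sub_translate, mul_sum, mul_left_comm (h ^ 2), lapH_eq, mul_add,
          sum_add_distrib]
        ring

lemma gradNorm2_sq_le_norm2_mul_norm2_lapH {h : ℝ} (hh : h ≠ 0) (φ : Grid m n) :
    gradNorm2 h φ ^ 2 ≤ norm2 h φ * norm2 h (lapH h φ) := by
  have cauchy_schwarz := Real.sum_mul_le_sqrt_mul_sqrt univ φ (fun p => -lapH h φ p)
  simp only [neg_sq, mul_neg, sum_neg_distrib] at cauchy_schwarz
  rw [gradNorm2_sq_eq_neg_sum_mul_lapH hh, norm2_eq_abs_mul_sqrt, norm2_eq_abs_mul_sqrt,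
    mul_mul_mul_comm, ← sq, sq_abs, ← mul_neg]
  exact mul_le_mul_of_nonneg_left cauchy_schwarz (sq_nonneg h)

lemma two_mul_norm2_sq_sub_le_norm4_pow_four (h : ℝ) (φ : Grid m n) :
    2 * norm2 h φ ^ 2 - (m : ℝ) * n * h ^ 2 ≤ norm4 h φ ^ 4 := by
  have pointwise := two_mul_sum_sq_sub_card_le_sum_pow_four φ
  rw [Fintype.card_prod, ZMod.card, ZMod.card, Nat.cast_mul] at pointwise
  rw [norm2_sq, norm4_pow_four]
  nlinarith [sq_nonneg h]

end Grid

/-- Coercivity of the discrete MPFC energy: there is a constant `C₅ > 0` depending only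
on `α` (not on `h`, `m`, `n`, `Lx`, `Ly`) such that
`F(φ) ≥ C₅ ‖φ‖_{2,2}² − Lx·Ly/4` for every periodic grid function `φ`. -/
theorem discrete_energy_coercive (α : ℝ) (hα : 0 < α) :
    ∃ C₅ > (0 : ℝ), ∀ (m n : ℕ) [NeZero m] [NeZero n] (h : ℝ), 0 < h →
      ∀ φ : Grid m n,
        energyF α h φ ≥ C₅ * norm22 h φ ^ 2 - ((m : ℝ) * h) * ((n : ℝ) * h) / 4 := by
  refine ⟨α / (6 + 2 * α), by positivity, fun m n _ _ h hh φ => ?_⟩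
  have quartic := two_mul_norm2_sq_sub_le_norm4_pow_four h φ
  have interpolation := gradNorm2_sq_le_norm2_mul_norm2_lapH hh.ne' φ
  have quadratic := quadratic_coercive_bound hα interpolation
  rw [energyF, norm22_sq]
  linarith
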